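/- In Twyst-off, for positive integers a and b, the four-stack position (a,b,b,a) is a P position if and only if (a = 1 and b = 2) or (a > 1 and b = 1). -/
import Mathlib



namespace TwystOff

/-- Contraction: merge the two neighbors of an interior zero stack; delete empty end stacks. -/
def contract : List ℕ → List ℕ
  | [] => []
  | a :: t =>
    if a = 0 then contract t
    else match t with
      | [] => [a]
      | [b] => if b = 0 then [a] else [a, b]
      | b :: c :: r => if b = 0 then contract ((a + c) :: r) else a :: contract (b :: c :: r)
termination_by l => l.length

theorem contract_sum (l : List ℕ) : (contract l).sum = l.sum := by
  induction l using contract.induct <;> rw [contract.eq_def] <;> simp_all <;> omega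

/-- A raw move: remove `k > 0` tiles from an end stack, or `k` tiles from each of two
consecutive stacks; the result is then contracted. -/
def premove (p q : List ℕ) : Prop :=
  (∃ a t k, p = a :: t ∧ 0 < k ∧ k ≤ a ∧ q = contract ((a - k) :: t)) ∨
  (∃ a t k, p = t ++ [a] ∧ 0 < k ∧ k ≤ a ∧ q = contract (t ++ [a - k])) ∨
  (∃ α a b β k, p = α ++ a :: b :: β ∧ 0 < k ∧ k ≤ a ∧ k ≤ b ∧
      q = contract (α ++ (a - k) :: (b - k) :: β))

/-- Moves of Twyst-off (positions are considered up to contraction). -/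
def Move (p q : List ℕ) : Prop := premove (contract p) q

theorem Move.sum_lt {p q : List ℕ} (h : Move p q) : q.sum < p.sum := by
  rw [← contract_sum p]
  rcases h with ⟨a, t, k, hp, hk, hka, hq⟩ | ⟨a, t, k, hp, hk, hka, hq⟩ |
    ⟨α, a, b, β, k, hp, hk, hka, hkb, hq⟩ <;>
    subst hq <;> rw [contract_sum, hp] <;> simp [List.sum_append] <;> omega

/-- P positions: every option is an N position (i.e. no option is itself P). -/
def PPos (p : List ℕ) : Prop := ∀ q, Move p q → ¬ PPos q
termination_by p.sum
decreasing_by exact Move.sum_lt (by assumption)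

/-- N positions: some option is a P position. -/
def NPos (p : List ℕ) : Prop := ∃ q, Move p q ∧ PPos q

lemma PPos_iff (p : List ℕ) : PPos p ↔ ∀ q, Move p q → ¬ PPos q := by
  rw [PPos]

lemma contract_pos (l : List ℕ) (h : ∀ x ∈ l, 0 < x) : contract l = l := by
  induction l using contract.induct <;> rw [contract.eq_def] <;> simp_all <;> omega

lemma move_left {a : ℕ} {t : List ℕ} (hpos : ∀ x ∈ a :: t, 0 < x) {k : ℕ}
    (h1 : 0 < k) (h2 : k ≤ a) : Move (a :: t) (contract ((a - k) :: t)) := by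
  unfold Move; rw [contract_pos _ hpos]; exact Or.inl ⟨a, t, k, rfl, h1, h2, rfl⟩

lemma move_right {a : ℕ} {t : List ℕ} (hpos : ∀ x ∈ t ++ [a], 0 < x) {k : ℕ}
    (h1 : 0 < k) (h2 : k ≤ a) : Move (t ++ [a]) (contract (t ++ [a - k])) := by
  unfold Move; rw [contract_pos _ hpos]; exact Or.inr (Or.inl ⟨a, t, k, rfl, h1, h2, rfl⟩)

lemma move_pair {a b : ℕ} {α β : List ℕ} (hpos : ∀ x ∈ α ++ a :: b :: β, 0 < x) {k : ℕ}
    (h1 : 0 < k) (h2 : k ≤ a) (h3 : k ≤ b) :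
    Move (α ++ a :: b :: β) (contract (α ++ (a - k) :: (b - k) :: β)) := by
  unfold Move; rw [contract_pos _ hpos]
  exact Or.inr (Or.inr ⟨α, a, b, β, k, rfl, h1, h2, h3, rfl⟩)

lemma move4 {p1 p2 p3 p4 : ℕ} {q : List ℕ} (h1 : 0 < p1) (h2 : 0 < p2) (h3 : 0 < p3)
    (h4 : 0 < p4) (h : Move [p1, p2, p3, p4] q) :
    (∃ k, 0 < k ∧ k ≤ p1 ∧ q = contract [p1 - k, p2, p3, p4]) ∨
    (∃ k, 0 < k ∧ k ≤ p4 ∧ q = contract [p1, p2, p3, p4 - k]) ∨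
    (∃ k, 0 < k ∧ k ≤ p1 ∧ k ≤ p2 ∧ q = contract [p1 - k, p2 - k, p3, p4]) ∨
    (∃ k, 0 < k ∧ k ≤ p2 ∧ k ≤ p3 ∧ q = contract [p1, p2 - k, p3 - k, p4]) ∨
    (∃ k, 0 < k ∧ k ≤ p3 ∧ k ≤ p4 ∧ q = contract [p1, p2, p3 - k, p4 - k]) := by
  unfold Move at h
  rw [contract_pos] at h
  · rcases h with ⟨a, t, k, hp, hk, hka, hq⟩ | ⟨a, t, k, hp, hk, hka, hq⟩ |
      ⟨α, a, b, β, k, hp, hk, hka, hkb, hq⟩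
    · simp at hp; obtain ⟨rfl, rfl⟩ := hp
      exact Or.inl ⟨k, hk, hka, hq⟩
    · rcases t with _|⟨x1,_|⟨x2,_|⟨x3,_|⟨x4,t⟩⟩⟩⟩ <;> simp at hp
      obtain ⟨rfl, rfl, rfl, rfl⟩ := hp
      exact Or.inr (Or.inl ⟨k, hk, hka, by simpa using hq⟩)
    · rcases α with _|⟨x1,_|⟨x2,_|⟨x3,t⟩⟩⟩
      · simp at hp
        obtain ⟨rfl, rfl, rfl⟩ := hp
        exact Or.inr (Or.inr (Or.inl ⟨k, hk, hka, hkb, by simpa using hq⟩))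
      · simp at hp
        obtain ⟨rfl, rfl, rfl, rfl⟩ := hp
        exact Or.inr (Or.inr (Or.inr (Or.inl ⟨k, hk, hka, hkb, by simpa using hq⟩)))
      · simp at hp
        obtain ⟨rfl, rfl, rfl, rfl, rfl⟩ := hp
        exact Or.inr (Or.inr (Or.inr (Or.inr ⟨k, hk, hka, hkb, by simpa using hq⟩)))
      · exfalso; have := congrArg List.length hp; simp at this; omega
  · simp; omega
lemma move1 {p1 : ℕ} {q : List ℕ} (h1 : 0 < p1) (h : Move [p1] q) :
    ∃ k, 0 < k ∧ k ≤ p1 ∧ q = contract [p1 - k] := by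
  unfold Move at h
  rw [contract_pos] at h
  · rcases h with ⟨a, t, k, hp, hk, hka, hq⟩ | ⟨a, t, k, hp, hk, hka, hq⟩ |
      ⟨α, a, b, β, k, hp, hk, hka, hkb, hq⟩
    · simp at hp; obtain ⟨rfl, rfl⟩ := hp
      exact ⟨k, hk, hka, hq⟩
    · rcases t with _|⟨x1,t⟩ <;> simp at hp
      · obtain rfl := hp
        exact ⟨k, hk, hka, by simpa using hq⟩
    · exfalso; have := congrArg List.length hp; simp at this; omega
  · simp; omega

lemma move2 {p1 p2 : ℕ} {q : List ℕ} (h1 : 0 < p1) (h2 : 0 < p2) (h : Move [p1, p2] q) :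
    (∃ k, 0 < k ∧ k ≤ p1 ∧ q = contract [p1 - k, p2]) ∨
    (∃ k, 0 < k ∧ k ≤ p2 ∧ q = contract [p1, p2 - k]) ∨
    (∃ k, 0 < k ∧ k ≤ p1 ∧ k ≤ p2 ∧ q = contract [p1 - k, p2 - k]) := by
  unfold Move at h
  rw [contract_pos] at h
  · rcases h with ⟨a, t, k, hp, hk, hka, hq⟩ | ⟨a, t, k, hp, hk, hka, hq⟩ |
      ⟨α, a, b, β, k, hp, hk, hka, hkb, hq⟩
    · simp at hp; obtain ⟨rfl, rfl⟩ := hp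
      exact Or.inl ⟨k, hk, hka, hq⟩
    · rcases t with _|⟨x1,_|⟨x2,t⟩⟩ <;> simp at hp
      · obtain ⟨rfl, rfl⟩ := hp
        exact Or.inr (Or.inl ⟨k, hk, hka, by simpa using hq⟩)
    · rcases α with _|⟨x1,t⟩ <;> simp at hp
      · obtain ⟨rfl, rfl, rfl⟩ := hp
        exact Or.inr (Or.inr ⟨k, hk, hka, hkb, by simpa using hq⟩)
      · exfalso
        rcases hp with ⟨-, hp⟩
        have := congrArg List.length hp; simp at this; omega
  · simp; omega

lemma move3 {p1 p2 p3 : ℕ} {q : List ℕ} (h1 : 0 < p1) (h2 : 0 < p2) (h3 : 0 < p3)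
    (h : Move [p1, p2, p3] q) :
    (∃ k, 0 < k ∧ k ≤ p1 ∧ q = contract [p1 - k, p2, p3]) ∨
    (∃ k, 0 < k ∧ k ≤ p3 ∧ q = contract [p1, p2, p3 - k]) ∨
    (∃ k, 0 < k ∧ k ≤ p1 ∧ k ≤ p2 ∧ q = contract [p1 - k, p2 - k, p3]) ∨
    (∃ k, 0 < k ∧ k ≤ p2 ∧ k ≤ p3 ∧ q = contract [p1, p2 - k, p3 - k]) := by
  unfold Move at h
  rw [contract_pos] at h
  · rcases h with ⟨a, t, k, hp, hk, hka, hq⟩ | ⟨a, t, k, hp, hk, hka, hq⟩ |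
      ⟨α, a, b, β, k, hp, hk, hka, hkb, hq⟩
    · simp at hp; obtain ⟨rfl, rfl⟩ := hp
      exact Or.inl ⟨k, hk, hka, hq⟩
    · rcases t with _|⟨x1,_|⟨x2,_|⟨x3,t⟩⟩⟩ <;> simp at hp
      · obtain ⟨rfl, rfl, rfl⟩ := hp
        exact Or.inr (Or.inl ⟨k, hk, hka, by simpa using hq⟩)
    · rcases α with _|⟨x1,_|⟨x2,t⟩⟩ <;> simp at hp
      · obtain ⟨rfl, rfl, rfl⟩ := hp
        exact Or.inr (Or.inr (Or.inl ⟨k, hk, hka, hkb, by simpa using hq⟩))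
      · obtain ⟨rfl, rfl, rfl, rfl⟩ := hp
        exact Or.inr (Or.inr (Or.inr ⟨k, hk, hka, hkb, by simpa using hq⟩))
      · exfalso
        rcases hp with ⟨-, -, hp⟩
        have := congrArg List.length hp; simp at this; omega
  · simp; omega

lemma not_PPos {p q : List ℕ} (h : Move p q) (hq : PPos q) : ¬ PPos p :=
  fun hp => (PPos_iff p).mp hp q h hq

lemma contract_cons_zero (t : List ℕ) : contract (0 :: t) = contract t := by
  rw [contract.eq_def]; simp

lemma P_nil : PPos [] := by
  rw [PPos_iff]
  rintro q (⟨a,t,k,hp,_⟩|⟨a,t,k,hp,_⟩|⟨α,a,b,β,k,hp,_⟩) <;> simp [contract] at hp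

lemma N_single {x : ℕ} (hx : 0 < x) : ¬ PPos [x] := by
  have h := move_left (a := x) (t := []) (by simpa using hx) hx le_rfl
  rw [Nat.sub_self, contract_cons_zero] at h
  exact not_PPos (by simpa [contract] using h) P_nil

lemma N_pair_eq {a : ℕ} (ha : 0 < a) : ¬ PPos [a, a] := by
  have h := move_pair (a := a) (b := a) (α := []) (β := []) (by simp; omega) ha le_rfl le_rfl
  rw [Nat.sub_self] at h
  simp only [List.nil_append, contract_cons_zero] at h
  exact not_PPos (by simpa [contract] using h) P_nil

lemma P_12 : PPos [1, 2] := by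
  rw [PPos_iff]
  intro q hq
  rcases move2 one_pos two_pos hq with ⟨k,hk,hk1,rfl⟩|⟨k,hk,hk1,rfl⟩|⟨k,hk,hk1,hk2,rfl⟩ <;>
      interval_cases k <;> simp [contract]
  · exact N_single two_pos
  · exact N_pair_eq one_pos
  · exact N_single one_pos
  · exact N_single one_pos

lemma P_21 : PPos [2, 1] := by
  rw [PPos_iff]
  intro q hq
  rcases move2 two_pos one_pos hq with ⟨k,hk,hk1,rfl⟩|⟨k,hk,hk1,rfl⟩|⟨k,hk,hk1,hk2,rfl⟩ <;>
      interval_cases k <;> simp [contract]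
  · exact N_pair_eq one_pos
  · exact N_single one_pos
  · exact N_single two_pos
  · exact N_single one_pos

lemma P_111 : PPos [1, 1, 1] := by
  rw [PPos_iff]
  intro q hq
  rcases move3 one_pos one_pos one_pos hq with
      ⟨k,hk,hk1,rfl⟩|⟨k,hk,hk1,rfl⟩|⟨k,hk,hk1,hk2,rfl⟩|⟨k,hk,hk1,hk2,rfl⟩ <;>
      interval_cases k <;> simp [contract]
  · exact N_pair_eq one_pos
  · exact N_pair_eq one_pos
  · exact N_single one_pos
  · exact N_single one_pos

lemma N_11a {a : ℕ} (ha : 2 ≤ a) : ¬ PPos [1, 1, a] := by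
  by_cases h2 : a = 2
  · subst h2
    have h := move_left (a := 1) (t := [1, 2]) (by norm_num) one_pos le_rfl
    simp only [show (1:ℕ) - 1 = 0 from rfl, contract_cons_zero] at h
    rw [contract_pos _ (by norm_num)] at h
    exact not_PPos h P_12
  · have h := move_right (t := [1, 1]) (a := a) (by simp; omega) (k := a - 1)
      (by omega) (by omega)
    rw [show a - (a - 1) = 1 from by omega] at h
    simp only [List.cons_append, List.nil_append] at h
    rw [contract_pos _ (by norm_num)] at h
    exact not_PPos h P_111

lemma N_a11 {a : ℕ} (ha : 2 ≤ a) : ¬ PPos [a, 1, 1] := by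
  by_cases h2 : a = 2
  · subst h2
    have h := move_right (t := [2, 1]) (a := 1) (by norm_num) one_pos le_rfl
    simp only [List.cons_append, List.nil_append, show (1:ℕ) - 1 = 0 from rfl] at h
    rw [show contract [2, 1, 0] = [2, 1] from by simp [contract]] at h
    exact not_PPos h P_21
  · have h := move_left (a := a) (t := [1, 1]) (by simp; omega) (k := a - 1)
      (by omega) (by omega)
    rw [show a - (a - 1) = 1 from by omega] at h
    rw [contract_pos _ (by norm_num)] at h
    exact not_PPos h P_111

lemma N_111a {a : ℕ} (ha : 0 < a) : ¬ PPos [1, 1, 1, a] := by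
  have h := move_right (t := [1, 1, 1]) (a := a) (by simp; omega) ha le_rfl
  rw [Nat.sub_self] at h
  simp only [List.cons_append, List.nil_append] at h
  rw [show contract [1, 1, 1, 0] = [1, 1, 1] from by simp [contract]] at h
  exact not_PPos h P_111

lemma N_a111 {a : ℕ} (ha : 0 < a) : ¬ PPos [a, 1, 1, 1] := by
  have h := move_left (a := a) (t := [1, 1, 1]) (by simp; omega) ha le_rfl
  rw [Nat.sub_self, contract_cons_zero, contract_pos _ (by norm_num)] at h
  exact not_PPos h P_111

lemma N_221 : ¬ PPos [2, 2, 1] := by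
  have h := move_pair (a := 2) (b := 1) (α := [2]) (β := []) (by norm_num) one_pos
    one_le_two le_rfl
  simp only [List.cons_append, List.nil_append, show (2:ℕ) - 1 = 1 from rfl,
    show (1:ℕ) - 1 = 0 from rfl] at h
  rw [show contract [2, 1, 0] = [2, 1] from by simp [contract]] at h
  exact not_PPos h P_21

lemma N_122 : ¬ PPos [1, 2, 2] := by
  have h := move_pair (a := 1) (b := 2) (α := []) (β := [2]) (by norm_num) one_pos
    le_rfl one_le_two
  simp only [List.nil_append, show (1:ℕ) - 1 = 0 from rfl, show (2:ℕ) - 1 = 1 from rfl,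
    contract_cons_zero] at h
  rw [contract_pos _ (by norm_num)] at h
  exact not_PPos h P_12

lemma N_121 : ¬ PPos [1, 2, 1] := by
  have h := move_left (a := 1) (t := [2, 1]) (by norm_num) one_pos le_rfl
  simp only [show (1:ℕ) - 1 = 0 from rfl, contract_cons_zero] at h
  rw [contract_pos _ (by norm_num)] at h
  exact not_PPos h P_21

lemma P_1221 : PPos [1, 2, 2, 1] := by
  rw [PPos_iff]
  intro q hq
  rcases move4 one_pos two_pos two_pos one_pos hq with
      ⟨k,hk,hk1,rfl⟩|⟨k,hk,hk1,rfl⟩|⟨k,hk,hk1,hk2,rfl⟩|⟨k,hk,hk1,hk2,rfl⟩|⟨k,hk,hk1,hk2,rfl⟩ <;>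
      interval_cases k <;> simp [contract]
  · exact N_221
  · exact N_122
  · exact N_121
  · exact N_111a one_pos
  · exact N_pair_eq one_pos
  · exact N_121

lemma c1 {a : ℕ} (ha : 2 ≤ a) : contract [a - 1, 0, 1, a] = [a, a] := by
  rw [contract.eq_def]
  simp only [show a - 1 ≠ 0 from by omega, if_false, if_true, reduceIte]
  rw [show a - 1 + 1 = a from by omega]
  exact contract_pos _ (by simp; omega)

lemma c2 {a : ℕ} (ha : 0 < a) : contract [a, 0, 0, a] = [a, a] := by
  rw [contract.eq_def]
  simp only [show a ≠ 0 from by omega, if_false, reduceIte, Nat.add_zero]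
  exact contract_pos _ (by simp; omega)

lemma c3 {a : ℕ} (ha : 2 ≤ a) : contract [a, 1, 0, a - 1] = [a, a] := by
  have h1 : contract [1, 0, a - 1] = [a] := by
    rw [contract.eq_def]
    simp only [one_ne_zero, if_false, reduceIte]
    rw [show 1 + (a - 1) = a from by omega]
    exact contract_pos _ (by simp; omega)
  rw [contract.eq_def]
  simp only [show a ≠ 0 from by omega, if_false, reduceIte, one_ne_zero]
  rw [h1]

lemma c4 {a : ℕ} (ha : 0 < a) : contract [a, 1, 1, 0] = [a, 1, 1] := by
  rw [contract.eq_def]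
  simp only [show a ≠ 0 from by omega, if_false, reduceIte, one_ne_zero]
  rw [show contract [1, 1, 0] = [1, 1] from by simp [contract]]

lemma P_a11a : ∀ a : ℕ, 2 ≤ a → PPos [a, 1, 1, a] := by
  intro a
  induction a using Nat.strong_induction_on with
  | _ a IH =>
  intro ha
  have h0 : 0 < a := by omega
  rw [PPos_iff]
  intro q hq
  rcases move4 h0 one_pos one_pos h0 hq with
      ⟨k,hk,hk1,rfl⟩|⟨k,hk,hk1,rfl⟩|⟨k,hk,hk1,hk2,rfl⟩|⟨k,hk,hk1,hk2,rfl⟩|⟨k,hk,hk1,hk2,rfl⟩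
  · -- left end
    by_cases hka : k = a
    · subst hka
      rw [Nat.sub_self, contract_cons_zero, contract_pos _ (by simp; omega)]
      exact N_11a ha
    · by_cases hk1' : a - k = 1
      · rw [hk1', contract_pos _ (by simp; omega)]
        exact N_111a h0
      · rw [contract_pos _ (by simp; omega)]
        have hm := move_right (t := [a - k, 1, 1]) (a := a) (by simp; omega) hk hk1
        simp only [List.cons_append, List.nil_append] at hm
        rw [contract_pos _ (by simp; omega)] at hm
        exact not_PPos hm (IH (a - k) (by omega) (by omega))
  · -- right end
    by_cases hka : k = a
    · subst hka
      rw [Nat.sub_self, c4 h0]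
      exact N_a11 ha
    · by_cases hk1' : a - k = 1
      · rw [hk1', contract_pos _ (by simp; omega)]
        exact N_a111 h0
      · rw [contract_pos _ (by simp; omega)]
        have hm := move_left (a := a) (t := [1, 1, a - k]) (by simp; omega) hk hk1
        rw [contract_pos _ (by simp; omega)] at hm
        exact not_PPos hm (IH (a - k) (by omega) (by omega))
  · -- pair (a, 1)
    interval_cases k
    simp only [show (1:ℕ) - 1 = 0 from rfl]
    rw [c1 ha]
    exact N_pair_eq h0
  · -- pair (1, 1)
    interval_cases k
    simp only [show (1:ℕ) - 1 = 0 from rfl]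
    rw [c2 h0]
    exact N_pair_eq h0
  · -- pair (1, a)
    interval_cases k
    simp only [show (1:ℕ) - 1 = 0 from rfl]
    rw [c3 ha]
    exact N_pair_eq h0

end TwystOff


open TwystOff in
theorem four_stack_abba (a b : ℕ) (ha : 0 < a) (hb : 0 < b) :
    TwystOff.PPos [a, b, b, a] ↔ (a = 1 ∧ b = 2) ∨ (1 < a ∧ b = 1) := by
  constructor
  · intro hP
    by_contra hR
    push_neg at hR
    obtain ⟨h1, h2⟩ := hR
    rcases Nat.lt_or_ge a 2 with halt | ha2
    · have h1' : a = 1 := by omega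
      subst h1'
      have hb2 : b ≠ 2 := h1 rfl
      rcases Nat.lt_or_ge b 3 with hb3 | hb3
      · have hb1 : b = 1 := by omega
        subst hb1
        exact N_111a one_pos hP
      · have hm := move_pair (a := b) (b := b) (α := [1]) (β := [1]) (by simp; omega)
          (k := b - 2) (by omega) (by omega) (by omega)
        rw [show b - (b - 2) = 2 from by omega] at hm
        simp only [List.cons_append, List.nil_append] at hm
        rw [contract_pos _ (by norm_num)] at hm
        exact not_PPos hm P_1221 hP
    · rcases Nat.lt_or_ge b 2 with hb2 | hb2
      · exact h2 (by omega) (by omega)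
      · have hm := move_pair (a := b) (b := b) (α := [a]) (β := [a]) (by simp; omega)
          (k := b - 1) (by omega) (by omega) (by omega)
        rw [show b - (b - 1) = 1 from by omega] at hm
        simp only [List.cons_append, List.nil_append] at hm
        rw [contract_pos _ (by simp; omega)] at hm
        exact not_PPos hm (P_a11a a ha2) hP
  · rintro (⟨rfl, rfl⟩ | ⟨ha2, rfl⟩)
    · exact P_1221
    · exact P_a11a a ha2
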